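/- arXiv:1403.5246 — 5 statements merged into one kernel-verified Lean document; each statement's English description precedes it below -/
import Mathlib

section
/- For all nonnegative integers m and n, the number S(m,n) = (2m)!(2n)!/(m!·n!·(m+n)!) is an integer. -/
lemma super_catalan_aux (n : ℕ) : ∀ m : ℕ,
    ((Nat.factorial m * Nat.factorial n * Nat.factorial (m + n) : ℕ) : ℤ) ∣
      ((Nat.factorial (2 * m) * Nat.factorial (2 * n) : ℕ) : ℤ) := by
  induction n with
  | zero =>
    intro m
    have h := Nat.factorial_mul_factorial_dvd_factorial_add m m
    have h2 : Nat.factorial m * Nat.factorial 0 * Nat.factorial (m + 0) ∣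
        Nat.factorial (2 * m) * Nat.factorial (2 * 0) := by
      simpa [Nat.factorial, two_mul] using h
    exact_mod_cast h2
  | succ n ih =>
    intro m
    obtain ⟨s, hs⟩ := ih m
    obtain ⟨t, ht⟩ := ih (m + 1)
    refine ⟨4 * s - t, ?_⟩
    have hm1 : ((m : ℤ) + 1) ≠ 0 := by positivity
    apply mul_left_cancel₀ hm1
    have e1 : (2 * (m + 1)) = (2 * m + 1) + 1 := by ring
    have e2 : (2 * (n + 1)) = (2 * n + 1) + 1 := by ring
    have e3 : (m + 1 + n) = (m + n) + 1 := by ring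
    have e4 : (m + (n + 1)) = (m + n) + 1 := by ring
    rw [e1, e3] at ht
    rw [e2, e4]
    push_cast [Nat.factorial_succ] at hs ht ⊢
    linear_combination (4 * ((n:ℤ) + 1) * ((m:ℤ) + n + 1) * ((m:ℤ) + 1)) * hs - ((n:ℤ) + 1) * ht

theorem super_catalan_S_integer (m n : ℕ) :
    (Nat.factorial m * Nat.factorial n * Nat.factorial (m + n)) ∣
      (Nat.factorial (2 * m) * Nat.factorial (2 * n)) := by
  exact_mod_cast super_catalan_aux n m
end

section
/- For all nonnegative integers m and n with (m,n) ≠ (0,0), the number S(m,n) = (2m)!(2n)!/(m!·n!·(m+n)!) is even; equivalently, T(m,n) = (2m)!(2n)!/(2·m!·n!·(m+n)!) is an integer. -/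
open Nat

private lemma S_int : ∀ m n : ℕ,
    ((m.factorial * n.factorial * (m + n).factorial : ℕ) : ℤ) ∣
      (((2 * m).factorial * (2 * n).factorial : ℕ) : ℤ) := by
  intro m
  induction m with
  | zero =>
      intro n
      have h := Nat.factorial_mul_factorial_dvd_factorial_add n n
      have h2 : n.factorial * n.factorial ∣ (2 * n).factorial := by
        rwa [two_mul]
      simpa [Nat.factorial] using (Int.natCast_dvd_natCast.mpr h2)
  | succ m ih =>
      intro n
      obtain ⟨a, ha⟩ := ih n
      obtain ⟨b, hb⟩ := ih (n + 1)
      have hne : ((n : ℤ) + 1) ≠ 0 := by positivity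
      rw [← mul_dvd_mul_iff_left hne]
      refine ⟨4 * a - b, ?_⟩
      have e1 : ((2 * (m + 1)).factorial : ℤ)
          = (2 * m + 2) * ((2 * m + 1) * ((2 * m).factorial)) := by
        rw [show 2 * (m + 1) = (2 * m + 1) + 1 from by ring,
          Nat.factorial_succ, Nat.factorial_succ]; push_cast; ring
      have e2 : (((m + 1).factorial : ℕ) : ℤ) = (m + 1) * m.factorial := by
        rw [Nat.factorial_succ]; push_cast; ring
      have e3 : (((m + 1 + n).factorial : ℕ) : ℤ)
          = (m + n + 1) * (m + n).factorial := by
        rw [show m + 1 + n = (m + n) + 1 from by ring, Nat.factorial_succ]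
        push_cast; ring
      have e4 : ((2 * (n + 1)).factorial : ℤ)
          = (2 * n + 2) * ((2 * n + 1) * ((2 * n).factorial)) := by
        rw [show 2 * (n + 1) = (2 * n + 1) + 1 from by ring,
          Nat.factorial_succ, Nat.factorial_succ]; push_cast; ring
      have e5 : (((n + 1).factorial : ℕ) : ℤ) = (n + 1) * n.factorial := by
        rw [Nat.factorial_succ]; push_cast; ring
      have e6 : (((m + (n + 1)).factorial : ℕ) : ℤ)
          = (m + n + 1) * (m + n).factorial := by
        rw [show m + (n + 1) = (m + n) + 1 from by ring, Nat.factorial_succ]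
        push_cast; ring
      push_cast at ha hb ⊢
      rw [e1, e2, e3]
      rw [e4, e5, e6] at hb
      linear_combination (4 * ((n : ℤ) + 1) * (m + 1) * (m + n + 1)) * ha
        - ((m : ℤ) + 1) * hb

private lemma S_even : ∀ m n : ℕ, n ≠ 0 ∨ m ≠ 0 →
    ((2 * (m.factorial * n.factorial * (m + n).factorial) : ℕ) : ℤ) ∣
      (((2 * m).factorial * (2 * n).factorial : ℕ) : ℤ) := by
  intro m
  induction m with
  | zero =>
      intro n hn
      obtain ⟨k, rfl⟩ := Nat.exists_eq_succ_of_ne_zero (hn.resolve_right (by simp))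
      have h : k.factorial * (k + 1).factorial ∣ (2 * k + 1).factorial := by
        have := Nat.factorial_mul_factorial_dvd_factorial_add k (k + 1)
        rwa [show k + (k + 1) = 2 * k + 1 from by ring] at this
      have h2 : 2 * ((k + 1).factorial * (k + 1).factorial) ∣ (2 * (k + 1)).factorial := by
        rw [show 2 * (k + 1) = (2 * k + 1) + 1 from by ring, Nat.factorial_succ,
          show (2 * k + 1 + 1) = 2 * (k + 1) from by ring]
        calc 2 * ((k + 1).factorial * (k + 1).factorial)
            = (2 * (k + 1)) * (k.factorial * (k + 1).factorial) := by
              rw [Nat.factorial_succ]; ring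
          _ ∣ (2 * (k + 1)) * (2 * k + 1).factorial :=
              Nat.mul_dvd_mul_left _ h
      exact_mod_cast Int.natCast_dvd_natCast.mpr (by simpa [Nat.factorial] using h2)
  | succ m ih =>
      intro n _
      obtain ⟨a, ha⟩ := S_int m n
      obtain ⟨b, hb⟩ := ih (n + 1) (Or.inl (by simp))
      have hne : ((n : ℤ) + 1) ≠ 0 := by positivity
      rw [← mul_dvd_mul_iff_left hne]
      refine ⟨2 * a - b, ?_⟩
      have e1 : ((2 * (m + 1)).factorial : ℤ)
          = (2 * m + 2) * ((2 * m + 1) * ((2 * m).factorial)) := by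
        rw [show 2 * (m + 1) = (2 * m + 1) + 1 from by ring,
          Nat.factorial_succ, Nat.factorial_succ]; push_cast; ring
      have e2 : (((m + 1).factorial : ℕ) : ℤ) = (m + 1) * m.factorial := by
        rw [Nat.factorial_succ]; push_cast; ring
      have e3 : (((m + 1 + n).factorial : ℕ) : ℤ)
          = (m + n + 1) * (m + n).factorial := by
        rw [show m + 1 + n = (m + n) + 1 from by ring, Nat.factorial_succ]
        push_cast; ring
      have e4 : ((2 * (n + 1)).factorial : ℤ)
          = (2 * n + 2) * ((2 * n + 1) * ((2 * n).factorial)) := by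
        rw [show 2 * (n + 1) = (2 * n + 1) + 1 from by ring,
          Nat.factorial_succ, Nat.factorial_succ]; push_cast; ring
      have e5 : (((n + 1).factorial : ℕ) : ℤ) = (n + 1) * n.factorial := by
        rw [Nat.factorial_succ]; push_cast; ring
      have e6 : (((m + (n + 1)).factorial : ℕ) : ℤ)
          = (m + n + 1) * (m + n).factorial := by
        rw [show m + (n + 1) = (m + n) + 1 from by ring, Nat.factorial_succ]
        push_cast; ring
      push_cast at ha hb ⊢
      rw [e1, e2, e3]
      rw [e4, e5, e6] at hb
      linear_combination (4 * ((n : ℤ) + 1) * (m + 1) * (m + n + 1)) * ha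
        - ((m : ℤ) + 1) * hb

theorem super_catalan_T_integer (m n : ℕ) (h : (m, n) ≠ (0, 0)) :
    (2 * (Nat.factorial m * Nat.factorial n * Nat.factorial (m + n))) ∣
      (Nat.factorial (2 * m) * Nat.factorial (2 * n)) := by
  have hmn : n ≠ 0 ∨ m ≠ 0 := by
    rcases Nat.eq_zero_or_pos n with hn | hn
    · subst hn
      right
      intro hm
      exact h (by simp [hm])
    · exact Or.inl hn.ne'
  exact_mod_cast S_even m n hmn
end

section
/- For all nonnegative integers m and n, the super Catalan numbers satisfy Rubenstein's identity 4·T(m,n) = T(m+1,n) + T(m,n+1). -/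
/-- The super Catalan number `T(m,n)` as a rational number. -/
def T (m n : ℕ) : ℚ :=
  (Nat.factorial (2 * m) * Nat.factorial (2 * n) : ℚ) /
    (2 * (Nat.factorial m * Nat.factorial n * Nat.factorial (m + n)))

lemma fact_cast_succ (k : ℕ) :
    ((Nat.factorial (k + 1) : ℚ)) = (k + 1) * Nat.factorial k := by
  rw [Nat.factorial_succ]; push_cast; ring

theorem rubenstein_identity (m n : ℕ) :
    4 * T m n = T (m + 1) n + T m (n + 1) := by
  unfold T
  have e1 : 2 * (m + 1) = (2 * m + 1) + 1 := by ring
  have e2 : 2 * (n + 1) = (2 * n + 1) + 1 := by ring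
  have e3 : m + 1 + n = (m + n) + 1 := by ring
  have e4 : m + (n + 1) = (m + n) + 1 := by ring
  rw [e1, e2, e3, e4]
  rw [fact_cast_succ (2*m+1), fact_cast_succ (2*m), fact_cast_succ (2*n+1),
    fact_cast_succ (2*n), fact_cast_succ m, fact_cast_succ n, fact_cast_succ (m+n)]
  have hm : (Nat.factorial m : ℚ) ≠ 0 := by exact_mod_cast (Nat.factorial_pos m).ne'
  have hn : (Nat.factorial n : ℚ) ≠ 0 := by exact_mod_cast (Nat.factorial_pos n).ne'
  have hmn : (Nat.factorial (m + n) : ℚ) ≠ 0 := by exact_mod_cast (Nat.factorial_pos (m + n)).ne'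
  have h1 : ((m : ℚ) + 1) ≠ 0 := by positivity
  have h2 : ((n : ℚ) + 1) ≠ 0 := by positivity
  have h3 : ((m : ℚ) + n + 1) ≠ 0 := by positivity
  push_cast
  field_simp
  ring
end

section
/- For all positive integers m and n, T(m,n) = Σ_{r≥1} (-1)^(r-1) · (r²/(m·n)) · binom(2m, m+r) · binom(2n, n+r), where the sum is over 1 ≤ r ≤ min(m,n). -/
open Finset Function

namespace SuperCatalan

lemma T_comm (m n : ℕ) : T m n = T n m := by
  rw [T, T, add_comm n m]
  ring

lemma mul_T_add_one_left (m n : ℕ) :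
    (m + n + 1 : ℚ) * T (m + 1) n = 2 * (2 * m + 1) * T m n := by
  simp only [T, Nat.mul_succ, Nat.factorial_succ, Nat.succ_add]
  push_cast
  field_simp
  ring

lemma T_add_one_left_add_T_add_one_right (m n : ℕ) :
    T (m + 1) n + T m (n + 1) = 4 * T m n := by
  have hm := mul_T_add_one_left m n
  have hn := mul_T_add_one_left n m
  rw [T_comm n, T_comm (n + 1), add_comm (n : ℚ)] at hn
  apply mul_left_cancel₀ (by positivity : (m + n + 1 : ℚ) ≠ 0)
  linear_combination hm + hn

lemma two_mul_T_zero_left (n : ℕ) : 2 * T 0 n = (2 * n).choose n := by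
  rw [T, Nat.cast_choose ℚ (by omega : n ≤ 2 * n), show 2 * n - n = n by omega]
  simp only [mul_zero, Nat.factorial_zero, Nat.cast_one, one_mul, zero_add]
  field_simp

def intChoose (N : ℕ) (j : ℤ) : ℚ := if 0 ≤ j then (N.choose j.toNat : ℚ) else 0

lemma intChoose_of_nonneg {N : ℕ} {j : ℤ} (h : 0 ≤ j) : intChoose N j = N.choose j.toNat :=
  if_pos h

lemma intChoose_of_neg {N : ℕ} {j : ℤ} (h : j < 0) : intChoose N j = 0 := if_neg (by omega)

lemma intChoose_of_lt {N : ℕ} {j : ℤ} (h : (N : ℤ) < j) : intChoose N j = 0 := by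
  rw [intChoose_of_nonneg (by omega), Nat.choose_eq_zero_of_lt (by omega), Nat.cast_zero]

lemma intChoose_natCast (N k : ℕ) : intChoose N k = N.choose k := by
  simp [intChoose]

lemma hasFiniteSupport_intChoose (N : ℕ) : (intChoose N).HasFiniteSupport := by
  refine (Set.finite_Icc (0 : ℤ) N).subset fun j hj => ?_
  by_contra h
  rcases not_and_or.mp (Set.mem_Icc.not.mp h) with h | h
  · exact hj (intChoose_of_neg (not_le.mp h))
  · exact hj (intChoose_of_lt (not_le.mp h))

lemma intChoose_sub_self (N : ℕ) (j : ℤ) : intChoose N (N - j) = intChoose N j := by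
  rcases lt_or_ge j 0 with h | h
  · rw [intChoose_of_neg h, intChoose_of_lt (by omega)]
  rcases lt_or_ge (N : ℤ) j with h' | h'
  · rw [intChoose_of_lt h', intChoose_of_neg (by omega)]
  lift j to ℕ using h
  rw [show (N : ℤ) - j = (N - j : ℕ) by omega, intChoose_natCast, intChoose_natCast,
    Nat.choose_symm (by omega)]

lemma intChoose_succ (N : ℕ) (j : ℤ) :
    intChoose (N + 1) j = intChoose N (j - 1) + intChoose N j := by
  rcases lt_or_ge j 1 with h | h
  · rcases lt_or_ge j 0 with h' | h'
    · rw [intChoose_of_neg h', intChoose_of_neg h', intChoose_of_neg (by omega), add_zero]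
    · obtain rfl : j = 0 := by omega
      simp [intChoose]
  obtain ⟨i, rfl⟩ : ∃ i : ℕ, j = i + 1 := ⟨(j - 1).toNat, by omega⟩
  rw [add_sub_cancel_right, ← Nat.cast_add_one, intChoose_natCast, intChoose_natCast,
    intChoose_natCast, Nat.choose_succ_succ', Nat.cast_add]

lemma mul_intChoose_succ (N : ℕ) (j : ℤ) :
    j * intChoose (N + 1) j = (N + 1) * intChoose N (j - 1) := by
  rcases lt_or_ge j 1 with h | h
  · rcases lt_or_ge j 0 with h' | h'
    · rw [intChoose_of_neg h', intChoose_of_neg (by omega), mul_zero, mul_zero]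
    · obtain rfl : j = 0 := by omega
      simp [intChoose]
  obtain ⟨i, rfl⟩ : ∃ i : ℕ, j = i + 1 := ⟨(j - 1).toNat, by omega⟩
  rw [add_sub_cancel_right, ← Nat.cast_add_one, intChoose_natCast, intChoose_natCast, mul_comm]
  exact_mod_cast (Nat.add_one_mul_choose_eq N i).symm

lemma sub_mul_intChoose_succ (N : ℕ) (j : ℤ) :
    (N + 1 - j) * intChoose (N + 1) j = (N + 1) * intChoose N j := by
  linear_combination (N + 1 : ℚ) * intChoose_succ N j - mul_intChoose_succ N j

def centralRow (m : ℕ) (k : ℤ) : ℚ := intChoose (2 * m) (m + k)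

lemma centralRow_eq_zero {m : ℕ} {k : ℤ} (h : (m : ℤ) < |k|) : centralRow m k = 0 := by
  rcases lt_abs.mp h with h | h
  · exact intChoose_of_lt (by omega)
  · exact intChoose_of_neg (by omega)

lemma hasFiniteSupport_centralRow (m : ℕ) : (centralRow m).HasFiniteSupport :=
  (hasFiniteSupport_intChoose _).comp_of_injective (add_right_injective (m : ℤ))

lemma centralRow_neg (m : ℕ) (k : ℤ) : centralRow m (-k) = centralRow m k := by
  rw [centralRow, centralRow, ← intChoose_sub_self]
  congr 1
  push_cast
  ring

lemma centralRow_natCast (m r : ℕ) : centralRow m r = (2 * m).choose (m + r) := by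
  rw [centralRow, ← intChoose_natCast]
  push_cast
  rfl

lemma centralRow_add_one (m : ℕ) (k : ℤ) : centralRow (m + 1) k =
    centralRow m (k - 1) + 2 * centralRow m k + centralRow m (k + 1) := by
  simp only [centralRow]
  rw [show 2 * (m + 1) = 2 * m + 1 + 1 by ring, intChoose_succ, intChoose_succ, intChoose_succ]
  push_cast
  ring_nf

lemma centralRow_eq_add {m : ℕ} (hm : 0 < m) (k : ℤ) : centralRow m k =
    intChoose (2 * m - 1) (m + (k - 1)) + intChoose (2 * m - 1) (m + k) := by
  obtain ⟨N, hN⟩ : ∃ N, 2 * m = N + 1 := ⟨2 * m - 1, by omega⟩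
  rw [centralRow, hN, intChoose_succ, Nat.add_sub_cancel, add_sub_assoc]

lemma mul_centralRow {m : ℕ} (hm : 0 < m) (k : ℤ) : k * centralRow m k =
    m * (intChoose (2 * m - 1) (m + (k - 1)) - intChoose (2 * m - 1) (m + k)) := by
  obtain ⟨N, hN⟩ : ∃ N, 2 * m = N + 1 := ⟨2 * m - 1, by omega⟩
  have hNq : (N + 1 : ℚ) = 2 * m := by exact_mod_cast hN.symm
  -- subtract `(2m - j) C(2m, j) = 2m C(2m-1, j)` from `j C(2m, j) = 2m C(2m-1, j-1)`, `j = m + k`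
  have hj := mul_intChoose_succ N (m + k)
  have hj' := sub_mul_intChoose_succ N (m + k)
  rw [centralRow, hN, Nat.add_sub_cancel, ← add_sub_assoc]
  push_cast at hj hj' ⊢
  linear_combination (hj - hj' + (intChoose N (m + k - 1) - intChoose N (m + k) +
    intChoose (N + 1) (m + k)) * hNq) / 2

section NegOnePow

variable {α : Type*} [DivisionRing α]

lemma neg_one_zpow_add_one (k : ℤ) : (-1 : α) ^ (k + 1) = -(-1) ^ k := by
  rw [zpow_add_one₀ (by norm_num), mul_neg_one]

lemma neg_one_zpow_sub_one (k : ℤ) : (-1 : α) ^ (k - 1) = -(-1) ^ k := by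
  rw [zpow_sub_one₀ (by norm_num), inv_neg_one, mul_neg_one]

lemma neg_one_zpow_neg (k : ℤ) : (-1 : α) ^ (-k) = (-1) ^ k := by
  rw [← inv_zpow', inv_neg_one]

end NegOnePow

noncomputable def altPairing (f g : ℤ → ℚ) : ℚ := ∑ᶠ k, (-1 : ℚ) ^ k * f k * g k

lemma altPairing_comp_sub_one (f g : ℤ → ℚ) :
    altPairing (fun k => f (k - 1)) (fun k => g (k - 1)) = -altPairing f g := by
  rw [altPairing, altPairing, ← finsum_comp_equiv (Equiv.addRight 1), ← finsum_neg_distrib]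
  refine finsum_congr fun k => ?_
  simp only [Equiv.coe_addRight, add_sub_cancel_right, neg_one_zpow_add_one]
  ring

lemma altPairing_sub_one_left (f g : ℤ → ℚ) :
    altPairing (fun k => f (k - 1)) g = -altPairing f (fun k => g (k + 1)) := by
  simpa using altPairing_comp_sub_one f (fun k => g (k + 1))

lemma altPairing_add_one_left (f g : ℤ → ℚ) :
    altPairing (fun k => f (k + 1)) g = -altPairing f (fun k => g (k - 1)) := by
  have h := altPairing_comp_sub_one (fun k => f (k + 1)) g
  simp only [sub_add_cancel] at h
  rw [h, neg_neg]

lemma altPairing_add_left {f₁ f₂ g : ℤ → ℚ} (hg : g.HasFiniteSupport) :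
    altPairing (fun k => f₁ k + f₂ k) g = altPairing f₁ g + altPairing f₂ g := by
  rw [altPairing, altPairing, altPairing, ← finsum_add_distrib (by fun_prop) (by fun_prop)]
  exact finsum_congr fun k => by ring

lemma altPairing_add_right {f g₁ g₂ : ℤ → ℚ} (hf : f.HasFiniteSupport) :
    altPairing f (fun k => g₁ k + g₂ k) = altPairing f g₁ + altPairing f g₂ := by
  rw [altPairing, altPairing, altPairing, ← finsum_add_distrib (by fun_prop) (by fun_prop)]
  exact finsum_congr fun k => by ring

lemma altPairing_const_mul_left (c : ℚ) (f g : ℤ → ℚ) :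
    altPairing (fun k => c * f k) g = c * altPairing f g := by
  rw [altPairing, altPairing, mul_finsum]
  exact finsum_congr fun k => by ring

lemma altPairing_const_mul_right (c : ℚ) (f g : ℤ → ℚ) :
    altPairing f (fun k => c * g k) = c * altPairing f g := by
  rw [altPairing, altPairing, mul_finsum]
  exact finsum_congr fun k => by ring

lemma altPairing_second_difference {f g : ℤ → ℚ} (hf : f.HasFiniteSupport)
    (hg : g.HasFiniteSupport) :
    altPairing (fun k => f (k - 1) + 2 * f k + f (k + 1)) g +
      altPairing f (fun k => g (k - 1) + 2 * g k + g (k + 1)) = 4 * altPairing f g := by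
  rw [altPairing_add_left hg, altPairing_add_left hg, altPairing_add_right hf,
    altPairing_add_right hf, altPairing_const_mul_left, altPairing_const_mul_right,
    altPairing_sub_one_left, altPairing_add_one_left]
  ring

lemma altPairing_add_add_sub_sub {f g : ℤ → ℚ} (hg : g.HasFiniteSupport) :
    altPairing (fun k => f (k - 1) + f k) (fun k => g (k - 1) + g k) +
      altPairing (fun k => f (k - 1) - f k) (fun k => g (k - 1) - g k) = 0 := by
  have hsum : altPairing (fun k => f (k - 1) + f k) (fun k => g (k - 1) + g k) +
      altPairing (fun k => f (k - 1) - f k) (fun k => g (k - 1) - g k) =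
      2 * (altPairing (fun k => f (k - 1)) (fun k => g (k - 1)) + altPairing f g) := by
    rw [altPairing, altPairing, altPairing, altPairing,
      ← finsum_add_distrib (by fun_prop (disch := exact sub_left_injective))
        (by fun_prop (disch := exact sub_left_injective)),
      ← finsum_add_distrib (by fun_prop (disch := exact sub_left_injective)) (by fun_prop),
      mul_finsum]
    exact finsum_congr fun k => by ring
  rw [hsum, altPairing_comp_sub_one, neg_add_cancel, mul_zero]

lemma altPairing_centralRow (m n : ℕ) :
    altPairing (centralRow m) (centralRow n) = 2 * T m n := by
  induction m generalizing n with
  | zero =>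
    rw [altPairing, two_mul_T_zero_left, finsum_eq_single _ 0 fun k hk => by
      rw [centralRow_eq_zero (by simpa using hk)]; ring]
    simp [centralRow, intChoose]
  | succ m ih =>
    have key := altPairing_second_difference (hasFiniteSupport_centralRow m)
      (hasFiniteSupport_centralRow n)
    simp only [← centralRow_add_one] at key
    rw [ih, ih] at key
    linear_combination key - 2 * T_add_one_left_add_T_add_one_right m n

lemma finsum_weighted_centralRow {m n : ℕ} (hm : 0 < m) (hn : 0 < n) :
    ∑ᶠ k : ℤ, (-1 : ℚ) ^ (k - 1) * ((k : ℚ) ^ 2 / (m * n)) * centralRow m k * centralRow n k =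
      altPairing (centralRow m) (centralRow n) := by
  let b (p : ℕ) (k : ℤ) : ℚ := intChoose (2 * p - 1) (p + k)
  have hrow {p : ℕ} (hp : 0 < p) : centralRow p = fun k => b p (k - 1) + b p k :=
    funext (centralRow_eq_add hp)
  have hb : (b n).HasFiniteSupport :=
    (hasFiniteSupport_intChoose _).comp_of_injective (add_right_injective (n : ℤ))
  have hterm (k : ℤ) :
      (-1 : ℚ) ^ (k - 1) * ((k : ℚ) ^ 2 / (m * n)) * centralRow m k * centralRow n k =
        -((-1) ^ k * (b m (k - 1) - b m k) * (b n (k - 1) - b n k)) :=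
    calc (-1 : ℚ) ^ (k - 1) * ((k : ℚ) ^ 2 / (m * n)) * centralRow m k * centralRow n k
        = -((-1) ^ k * (k * centralRow m k / m) * (k * centralRow n k / n)) := by
          rw [neg_one_zpow_sub_one]; ring
      _ = -((-1) ^ k * (b m (k - 1) - b m k) * (b n (k - 1) - b n k)) := by
          rw [mul_centralRow hm, mul_centralRow hn, mul_div_cancel_left₀ _ (by positivity),
            mul_div_cancel_left₀ _ (by positivity)]
  have hcancel := altPairing_add_add_sub_sub (f := b m) hb
  rw [← hrow hm, ← hrow hn] at hcancel
  rw [finsum_congr hterm, finsum_neg_distrib, ← altPairing]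
  linear_combination -hcancel

lemma finsum_eq_two_nsmul_sum_Icc_of_even {M : Type*} [AddCommMonoid M] {f : ℤ → M} (N : ℕ)
    (heven : ∀ k, f (-k) = f k) (hzero : f 0 = 0) (hsupp : ∀ k, (N : ℤ) < |k| → f k = 0) :
    ∑ᶠ k, f k = 2 • ∑ r ∈ Icc 1 N, f r := by
  have hsum (N : ℕ) : ∑ k ∈ Icc (-(N : ℤ)) N, f k = 2 • ∑ r ∈ Icc 1 N, f r := by
    induction N with
    | zero => simp [hzero]
    | succ N ih =>
      have hIcc : Icc (-((N + 1 : ℕ) : ℤ)) (N + 1 : ℕ) =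
          insert (-((N + 1 : ℕ) : ℤ)) (insert ((N + 1 : ℕ) : ℤ) (Icc (-(N : ℤ)) N)) := by
        ext; simp only [mem_Icc, mem_insert]; omega
      rw [hIcc, sum_insert (by simp only [mem_Icc, mem_insert]; omega),
        sum_insert (by simp only [mem_Icc]; omega), ih, sum_Icc_succ_top (by omega), heven,
        smul_add, two_nsmul]
      abel
  rw [finsum_eq_sum_of_support_subset f (s := Icc (-(N : ℤ)) N) fun k hk => ?_, hsum]
  by_contra h
  exact hk (hsupp k (lt_abs.mpr (by simp only [coe_Icc, Set.mem_Icc] at h; omega)))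

end SuperCatalan

open SuperCatalan

theorem T_eq_alternating_sum (m n : ℕ) (hm : 0 < m) (hn : 0 < n) :
    T m n = ∑ r ∈ Finset.Icc 1 (min m n),
      (-1 : ℚ) ^ (r - 1) * ((r : ℚ) ^ 2 / (m * n)) *
        (Nat.choose (2 * m) (m + r)) * (Nat.choose (2 * n) (n + r)) := by
  set w : ℤ → ℚ := fun k =>
    (-1 : ℚ) ^ (k - 1) * ((k : ℚ) ^ 2 / (m * n)) * centralRow m k * centralRow n k
  have hfold : ∑ᶠ k, w k = 2 • ∑ r ∈ Icc 1 (min m n), w r := by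
    refine finsum_eq_two_nsmul_sum_Icc_of_even _ (fun k => ?_) (by simp [w]) fun k hk => ?_
    · simp only [w, centralRow_neg, Int.cast_neg, neg_sq, neg_one_zpow_sub_one, neg_one_zpow_neg]
    · rcases min_choice m n with h | h <;> rw [h] at hk <;> simp [w, centralRow_eq_zero hk]
  have hterm : ∀ r ∈ Icc 1 (min m n), w r = (-1 : ℚ) ^ (r - 1) * ((r : ℚ) ^ 2 / (m * n)) *
      (Nat.choose (2 * m) (m + r)) * (Nat.choose (2 * n) (n + r)) := by
    intro r hr
    have hr1 : (r : ℤ) - 1 = (r - 1 : ℕ) := by simp only [mem_Icc] at hr; omega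
    simp only [w, hr1, zpow_natCast, centralRow_natCast, Int.cast_natCast]
  rw [← sum_congr rfl hterm]
  rw [finsum_weighted_centralRow hm hn, altPairing_centralRow, two_nsmul] at hfold
  linarith
end

section
/- For every positive integer n, T(2,n) equals the number of ordered pairs (π,ρ) of Dyck paths of total length 2n with |h(π) − h(ρ)| ≤ 1, where π and ρ may be empty and the empty path has height 0. -/
/-- The value `±1` of an up/down step (`true` is up). -/
def stepVal (b : Bool) : ℤ := if b then 1 else -1

/-- The level (y-coordinate) of the path `p` after `k` steps. -/
def lvl (p : List Bool) (k : ℕ) : ℤ := ((p.take k).map stepVal).sum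

/-- `p` is a Dyck path: it ends on the x-axis and never goes below it. -/
def IsDyck (p : List Bool) : Prop :=
  lvl p p.length = 0 ∧ ∀ k ≤ p.length, 0 ≤ lvl p k

/-- The height of a Dyck path: the maximum level attained. -/
def hgt (p : List Bool) : ℤ :=
  (((List.range (p.length + 1)).map (lvl p)).foldr max 0)

/-!
Let `G_j` and `E_j` be the generating functions, by semilength, of Dyck paths of height at most
`j` and exactly `j`. Cutting a nonempty path at its first return to the axis gives
`G_{j+1} = 1 + x G_j G_{j+1}`. With `y = C - 1`, where `C = 1 + x C²` is the Catalan series,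
so that `x (1 + y)² = y`, this recurrence is solved by `G_j (1 - y^{j+2}) = (1 + y) (1 - y^{j+1})`,
hence `E_j (1 - y^{j+1}) (1 - y^{j+2}) = y^j (1 - y)² (1 + y)`. The pairs are counted by
`∑_j (E_j² + 2 E_j E_{j+1})`, which telescopes to `1 + 2y - y²` up to a multiple of `y^{2J}`,
and the coefficient of `xⁿ` in `1 + 2y - y² = 4C - C² - 2` is `4 C_n - C_{n+1} = T(2,n)`.
-/

open Finset PowerSeries

instance : DecidablePred IsDyck := fun _ => inferInstanceAs (Decidable (_ ∧ _))

@[simp] lemma lvl_zero (p : List Bool) : lvl p 0 = 0 := by simp [lvl]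

lemma lvl_cons_succ (b : Bool) (p : List Bool) (k : ℕ) :
    lvl (b :: p) (k + 1) = stepVal b + lvl p k := by
  simp [lvl]

lemma lvl_append_of_le {A : List Bool} (B : List Bool) {k : ℕ} (hk : k ≤ A.length) :
    lvl (A ++ B) k = lvl A k := by
  rw [lvl, List.take_append_of_le_length hk, lvl]

lemma lvl_append_length_add (A B : List Bool) (m : ℕ) :
    lvl (A ++ B) (A.length + m) = lvl A A.length + lvl B m := by
  simp [lvl, List.take_append, List.take_of_length_le]

lemma lvl_le (p : List Bool) (k : ℕ) : lvl p k ≤ k := by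
  induction p generalizing k with
  | nil => simp [lvl]
  | cons b p ih =>
    cases k with
    | zero => simp
    | succ k =>
      rw [lvl_cons_succ]
      have : stepVal b ≤ 1 := by cases b <;> simp [stepVal]
      specialize ih k
      push_cast
      omega

lemma List.foldr_max_le_iff {α : Type*} [LinearOrder α] {l : List α} {b c : α} :
    l.foldr max b ≤ c ↔ b ≤ c ∧ ∀ a ∈ l, a ≤ c := by
  induction l with
  | nil => simp
  | cons a l ih => simp [ih, and_left_comm]

lemma hgt_le_iff {p : List Bool} {c : ℤ} : hgt p ≤ c ↔ ∀ k ≤ p.length, lvl p k ≤ c := by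
  simp only [hgt, List.foldr_max_le_iff, List.forall_mem_map, List.mem_range, Nat.lt_succ_iff]
  exact ⟨fun h => h.2, fun h => ⟨by simpa using h 0 (Nat.zero_le _), h⟩⟩

lemma lvl_le_hgt {p : List Bool} {k : ℕ} (hk : k ≤ p.length) : lvl p k ≤ hgt p :=
  hgt_le_iff.1 le_rfl k hk

lemma hgt_nonneg (p : List Bool) : 0 ≤ hgt p := by
  simpa using lvl_le_hgt (p := p) (Nat.zero_le _)

lemma hgt_le_length (p : List Bool) : hgt p ≤ p.length :=
  hgt_le_iff.2 fun k hk => (lvl_le p k).trans (by exact_mod_cast hk)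

def nestAppend (A B : List Bool) : List Bool := true :: (A ++ false :: B)

@[simp] lemma length_nestAppend (A B : List Bool) :
    (nestAppend A B).length = A.length + B.length + 2 := by
  simp [nestAppend]
  omega

lemma lvl_nestAppend_succ {A : List Bool} (B : List Bool) {k : ℕ} (hk : k ≤ A.length) :
    lvl (nestAppend A B) (k + 1) = 1 + lvl A k := by
  rw [nestAppend, lvl_cons_succ, lvl_append_of_le _ hk]
  rfl

lemma lvl_nestAppend_add {A : List Bool} (B : List Bool) (hA : lvl A A.length = 0) (m : ℕ) :
    lvl (nestAppend A B) (A.length + 2 + m) = lvl B m := by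
  rw [show A.length + 2 + m = A.length + (m + 1) + 1 by omega, nestAppend, lvl_cons_succ,
    lvl_append_length_add, hA, show m + 1 = 0 + m + 1 by omega, lvl_cons_succ]
  simp [stepVal]

lemma forall_lvl_nestAppend_iff (P : ℤ → Prop) {A : List Bool} (B : List Bool)
    (hA : lvl A A.length = 0) :
    (∀ k ≤ (nestAppend A B).length, P (lvl (nestAppend A B) k)) ↔
      P 0 ∧ (∀ k ≤ A.length, P (1 + lvl A k)) ∧ ∀ m ≤ B.length, P (lvl B m) := by
  refine ⟨fun h => ⟨by simpa using h 0 (Nat.zero_le _), fun k hk => ?_, fun m hm => ?_⟩,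
    fun ⟨h0, hA', hB⟩ k hk => ?_⟩
  · rw [← lvl_nestAppend_succ B hk]
    exact h _ (by simp; omega)
  · rw [← lvl_nestAppend_add B hA]
    exact h _ (by simp; omega)
  · rcases k with _ | k
    · simpa using h0
    · by_cases hkA : k ≤ A.length
      · rw [lvl_nestAppend_succ B hkA]
        exact hA' k hkA
      · rw [length_nestAppend] at hk
        rw [show k + 1 = A.length + 2 + (k - A.length - 1) by omega, lvl_nestAppend_add B hA]
        exact hB _ (by omega)

lemma isDyck_nestAppend_iff {A : List Bool} (B : List Bool) (hA : IsDyck A) :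
    IsDyck (nestAppend A B) ↔ IsDyck B := by
  have hend : lvl (nestAppend A B) (nestAppend A B).length = lvl B B.length := by
    rw [length_nestAppend, show A.length + B.length + 2 = A.length + 2 + B.length by omega,
      lvl_nestAppend_add B hA.1]
  rw [IsDyck, IsDyck, hend, forall_lvl_nestAppend_iff (0 ≤ ·) B hA.1]
  exact ⟨fun ⟨h1, _, _, h2⟩ => ⟨h1, h2⟩,
    fun ⟨h1, h2⟩ => ⟨h1, le_rfl, fun k hk => by linarith [hA.2 k hk], h2⟩⟩

lemma hgt_nestAppend_le_iff {A : List Bool} (B : List Bool) (hA : lvl A A.length = 0) (c : ℤ) :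
    hgt (nestAppend A B) ≤ c + 1 ↔ hgt A ≤ c ∧ hgt B ≤ c + 1 := by
  rw [hgt_le_iff, forall_lvl_nestAppend_iff (· ≤ c + 1) B hA, hgt_le_iff, hgt_le_iff]
  constructor
  · rintro ⟨-, hA', hB⟩
    exact ⟨fun k hk => by linarith [hA' k hk], hB⟩
  · rintro ⟨hA', hB⟩
    exact ⟨by simpa using hB 0 (Nat.zero_le _), fun k hk => by linarith [hA' k hk], hB⟩

-- The first step below the axis is a down-step from level `0`.
lemma forall_lvl_nonneg_or_exists_isDyck_append (w : List Bool) :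
    (∀ k ≤ w.length, 0 ≤ lvl w k) ∨ ∃ A B, IsDyck A ∧ w = A ++ false :: B := by
  induction w using List.reverseRecOn with
  | nil => simp
  | append_singleton w b ih =>
    rcases ih with hw | ⟨A, B, hA, rfl⟩
    · have hlast : lvl (w ++ [b]) (w.length + 1) = lvl w w.length + stepVal b := by
        simp [lvl]
      by_cases h : 0 ≤ lvl w w.length + stepVal b
      · left
        intro k hk
        rw [List.length_append, List.length_singleton] at hk
        rcases Nat.lt_or_ge k (w.length + 1) with hk' | hk'
        · rw [lvl_append_of_le _ (by omega)]
          exact hw k (by omega)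
        · rw [show k = w.length + 1 by omega, hlast]
          exact h
      · right
        have h0 := hw w.length le_rfl
        cases b
        · exact ⟨w, [], ⟨by simp [stepVal] at h; omega, hw⟩, rfl⟩
        · simp [stepVal] at h
          omega
    · exact .inr ⟨A, B ++ [b], hA, by simp⟩

theorem IsDyck.exists_eq_nestAppend {p : List Bool} (hp : IsDyck p) (hne : p ≠ []) :
    ∃ A B, IsDyck A ∧ IsDyck B ∧ p = nestAppend A B := by
  obtain ⟨b, w, rfl⟩ := List.exists_cons_of_ne_nil hne
  obtain rfl : b = true := by
    have := hp.2 1 (by simp)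
    rw [lvl_cons_succ, lvl_zero] at this
    cases b <;> simp_all [stepVal]
  have hw : lvl w w.length = -1 := by
    have := hp.1
    rw [List.length_cons, lvl_cons_succ] at this
    simp only [stepVal, if_true] at this
    omega
  obtain hw' | ⟨A, B, hA, rfl⟩ := forall_lvl_nonneg_or_exists_isDyck_append w
  · have := hw' w.length le_rfl
    omega
  · exact ⟨A, B, hA, (isDyck_nestAppend_iff B hA).1 hp, rfl⟩

lemma length_le_of_append_false_cons_eq {A A' B B' : List Bool}
    (hA : ∀ k ≤ A.length, 0 ≤ lvl A k) (hA' : lvl A' A'.length = 0)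
    (h : A ++ false :: B = A' ++ false :: B') : A.length ≤ A'.length := by
  by_contra! hlt
  have h1 : lvl (A' ++ false :: B') (A'.length + 1) = -1 := by
    rw [lvl_append_length_add, hA', show (1 : ℕ) = 0 + 1 from rfl, lvl_cons_succ]
    simp [stepVal]
  have h2 : lvl (A ++ false :: B) (A'.length + 1) = lvl A (A'.length + 1) :=
    lvl_append_of_le _ hlt
  have := hA (A'.length + 1) hlt
  rw [h] at h2
  omega

lemma nestAppend_inj {A A' B B' : List Bool} (hA : IsDyck A) (hA' : IsDyck A')
    (h : nestAppend A B = nestAppend A' B') : A = A' ∧ B = B' := by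
  simp only [nestAppend, List.cons.injEq, true_and] at h
  obtain ⟨rfl, hB⟩ := List.append_inj h <| le_antisymm
    (length_le_of_append_false_cons_eq hA.2 hA'.1 h)
    (length_le_of_append_false_cons_eq hA'.2 hA.1 h.symm)
  exact ⟨rfl, List.cons.inj hB |>.2⟩

theorem IsDyck.even_length {p : List Bool} (hp : IsDyck p) : Even p.length := by
  induction h : p.length using Nat.strong_induction_on generalizing p with
  | _ n ih =>
    rcases eq_or_ne p [] with rfl | hne
    · simp [← h]
    · obtain ⟨A, B, hA, hB, rfl⟩ := hp.exists_eq_nestAppend hne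
      rw [length_nestAppend] at h
      have := ih _ (by omega) hA rfl
      have := ih _ (by omega) hB rfl
      rw [← h]
      exact (Even.add ‹_› ‹_›).add even_two

lemma isDyck_and_hgt_nonpos_iff {p : List Bool} : IsDyck p ∧ hgt p ≤ 0 ↔ p = [] := by
  refine ⟨fun ⟨hp, h0⟩ => ?_, ?_⟩
  · by_contra hne
    obtain ⟨A, B, hA, -, rfl⟩ := hp.exists_eq_nestAppend hne
    have := ((hgt_nestAppend_le_iff B hA.1 (-1)).1 (by simpa using h0)).1
    linarith [hgt_nonneg A]
  · rintro rfl
    exact ⟨by simp [IsDyck], by simp [hgt, lvl]⟩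

section Counting

noncomputable def listsOfLength (L : ℕ) : Finset (List Bool) :=
  (List.finite_length_eq Bool L).toFinset

@[simp] lemma mem_listsOfLength {L : ℕ} {p : List Bool} :
    p ∈ listsOfLength L ↔ p.length = L := by
  simp [listsOfLength]

lemma listsOfLength_zero : listsOfLength 0 = {[]} := by
  ext p
  simp [List.length_eq_zero_iff]

noncomputable def pairsOfLength (L : ℕ) : Finset (List Bool × List Bool) :=
  (antidiagonal L).biUnion fun ab => listsOfLength ab.1 ×ˢ listsOfLength ab.2

@[simp] lemma mem_pairsOfLength {L : ℕ} {pr : List Bool × List Bool} :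
    pr ∈ pairsOfLength L ↔ pr.1.length + pr.2.length = L := by
  simp [pairsOfLength]

noncomputable def pathGF (s : List Bool → Prop) [DecidablePred s] : ℚ⟦X⟧ :=
  mk fun n => #{p ∈ listsOfLength (2 * n) | s p}

variable {s t u : List Bool → Prop} [DecidablePred s] [DecidablePred t] [DecidablePred u]

lemma coeff_pathGF (n : ℕ) : coeff n (pathGF s) = #{p ∈ listsOfLength (2 * n) | s p} :=
  coeff_mk _ _

lemma pathGF_eq_one (h : ∀ p, s p ↔ p = []) : pathGF s = 1 := by
  ext n
  rw [coeff_pathGF, coeff_one, filter_congr fun p _ => h p]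
  rcases n with _ | n
  · simp [listsOfLength_zero, filter_singleton]
  · rw [if_neg n.succ_ne_zero, Nat.cast_eq_zero, card_eq_zero, filter_eq_empty_iff]
    rintro p hp rfl
    simp at hp

lemma pathGF_eq_add (h : ∀ p, u p ↔ s p ∨ t p) (hst : ∀ p, s p → ¬ t p) :
    pathGF u = pathGF s + pathGF t := by
  ext n
  rw [map_add, coeff_pathGF, coeff_pathGF, coeff_pathGF, filter_congr fun p _ => h p, filter_or,
    card_union_of_disjoint (disjoint_filter.2 fun p _ => hst p), Nat.cast_add]

lemma coeff_pathGF_mul (hs : ∀ p, s p → Even p.length) (ht : ∀ p, t p → Even p.length)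
    (n : ℕ) :
    coeff n (pathGF s * pathGF t) = #{pr ∈ pairsOfLength (2 * n) | s pr.1 ∧ t pr.2} := by
  have hsplit : {pr ∈ pairsOfLength (2 * n) | s pr.1 ∧ t pr.2} =
      (antidiagonal n).biUnion fun ab =>
        {p ∈ listsOfLength (2 * ab.1) | s p} ×ˢ {q ∈ listsOfLength (2 * ab.2) | t q} := by
    ext ⟨p, q⟩
    simp only [mem_filter, mem_pairsOfLength, mem_biUnion, mem_product,
      HasAntidiagonal.mem_antidiagonal, mem_listsOfLength]
    constructor
    · rintro ⟨hlen, hp, hq⟩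
      obtain ⟨a, ha⟩ := hs p hp
      obtain ⟨b, hb⟩ := ht q hq
      exact ⟨(a, b), by omega, ⟨by omega, hp⟩, by omega, hq⟩
    · rintro ⟨⟨a, b⟩, hab, ⟨hp, hsp⟩, hq, htq⟩
      exact ⟨by simp only at hab hp hq; omega, hsp, htq⟩
  rw [coeff_mul, hsplit, card_biUnion]
  · push_cast
    refine sum_congr rfl fun ab _ => ?_
    rw [card_product, coeff_pathGF, coeff_pathGF, Nat.cast_mul]
  · rintro ⟨a, b⟩ hab ⟨a', b'⟩ hab' hne
    rw [Function.onFun, disjoint_left]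
    rintro ⟨p, q⟩ h h'
    simp only [mem_coe, HasAntidiagonal.mem_antidiagonal, mem_product, mem_filter,
      mem_listsOfLength] at hab hab' h h'
    exact hne (Prod.ext (by omega) (by omega))

end Counting

noncomputable def boundedGF (j : ℕ) : ℚ⟦X⟧ := pathGF fun p => IsDyck p ∧ hgt p ≤ j

noncomputable def exactGF (j : ℕ) : ℚ⟦X⟧ := pathGF fun p => IsDyck p ∧ hgt p = j

lemma card_isDyck_hgt_le_succ (L : ℕ) (c : ℤ) :
    #{p ∈ listsOfLength (L + 2) | IsDyck p ∧ hgt p ≤ c + 1} =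
      #{pr ∈ pairsOfLength L |
        (IsDyck pr.1 ∧ hgt pr.1 ≤ c) ∧ IsDyck pr.2 ∧ hgt pr.2 ≤ c + 1} := by
  symm
  apply card_bij fun pr _ => nestAppend pr.1 pr.2
  · rintro ⟨A, B⟩ h
    simp only [mem_filter, mem_pairsOfLength, mem_listsOfLength] at h ⊢
    obtain ⟨hlen, ⟨hA, hAc⟩, hB, hBc⟩ := h
    exact ⟨by simp [hlen], (isDyck_nestAppend_iff B hA).2 hB,
      (hgt_nestAppend_le_iff B hA.1 c).2 ⟨hAc, hBc⟩⟩
  · rintro ⟨A, B⟩ h ⟨A', B'⟩ h' heq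
    simp only [mem_filter] at h h'
    obtain ⟨rfl, rfl⟩ := nestAppend_inj h.2.1.1 h'.2.1.1 heq
    rfl
  · intro p hp
    simp only [mem_filter, mem_listsOfLength] at hp
    obtain ⟨hlen, hp, hc⟩ := hp
    obtain ⟨A, B, hA, hB, rfl⟩ := hp.exists_eq_nestAppend (by rintro rfl; simp at hlen)
    obtain ⟨hAc, hBc⟩ := (hgt_nestAppend_le_iff B hA.1 c).1 hc
    refine ⟨(A, B), ?_, rfl⟩
    simp only [length_nestAppend] at hlen
    simp only [mem_filter, mem_pairsOfLength]
    exact ⟨by omega, ⟨hA, hAc⟩, hB, hBc⟩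

lemma boundedGF_zero : boundedGF 0 = 1 :=
  pathGF_eq_one fun _ => by simpa using isDyck_and_hgt_nonpos_iff

lemma boundedGF_succ (j : ℕ) :
    boundedGF (j + 1) = 1 + X * (boundedGF j * boundedGF (j + 1)) := by
  have hev : ∀ (c : ℤ) (p : List Bool), IsDyck p ∧ hgt p ≤ c → Even p.length :=
    fun _ _ h => h.1.even_length
  ext n
  rcases n with _ | n
  · have h0 : IsDyck [] ∧ hgt [] ≤ (j : ℤ) + 1 :=
      ⟨(isDyck_and_hgt_nonpos_iff.2 rfl).1,
        (isDyck_and_hgt_nonpos_iff.2 rfl).2.trans (by positivity)⟩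
    simp [boundedGF, coeff_pathGF, listsOfLength_zero, filter_singleton, h0]
  · rw [map_add, coeff_one, if_neg n.succ_ne_zero, zero_add, coeff_succ_X_mul, boundedGF,
      boundedGF, coeff_pathGF_mul (hev _) (hev _), coeff_pathGF, Nat.mul_succ]
    push_cast
    rw [card_isDyck_hgt_le_succ]

lemma exactGF_zero : exactGF 0 = 1 :=
  pathGF_eq_one fun p => by
    rw [← isDyck_and_hgt_nonpos_iff]
    have := hgt_nonneg p
    constructor <;> rintro ⟨hp, h⟩ <;> exact ⟨hp, by omega⟩

lemma exactGF_succ (j : ℕ) : exactGF (j + 1) = boundedGF (j + 1) - boundedGF j := by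
  rw [eq_sub_iff_add_eq']
  refine (pathGF_eq_add (fun p => ?_) ?_).symm
  · push_cast
    constructor
    · rintro ⟨hp, h⟩
      exact (lt_or_eq_of_le h).imp (fun h => ⟨hp, by omega⟩) (fun h => ⟨hp, h⟩)
    · rintro (⟨hp, h⟩ | ⟨hp, h⟩) <;> exact ⟨hp, by omega⟩
  · rintro p ⟨-, h⟩ ⟨-, h'⟩
    push_cast at h'
    omega

noncomputable def dyckPairs (n : ℕ) : Finset (List Bool × List Bool) :=
  {pr ∈ pairsOfLength (2 * n) | IsDyck pr.1 ∧ IsDyck pr.2}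

lemma coeff_exactGF_mul (a b n : ℕ) :
    coeff n (exactGF a * exactGF b) = #{pr ∈ dyckPairs n | hgt pr.1 = a ∧ hgt pr.2 = b} := by
  rw [exactGF, exactGF, coeff_pathGF_mul (fun _ h => h.1.even_length)
    (fun _ h => h.1.even_length), dyckPairs, filter_filter]
  congr 2
  exact filter_congr fun _ _ => and_and_and_comm

section Telescoping

variable {R : Type*} [CommRing R] {x y : R}

theorem mul_one_sub_pow_of_rec (hy : x * (1 + y) ^ 2 = y) {g : ℕ → R} (h0 : g 0 = 1)
    (hrec : ∀ j, g (j + 1) = 1 + x * (g j * g (j + 1))) (j : ℕ) :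
    g j * (1 - y ^ (j + 2)) = (1 + y) * (1 - y ^ (j + 1)) := by
  induction j with
  | zero =>
    rw [h0]
    ring
  | succ j ih =>
    linear_combination (1 + y) * (1 - y ^ (j + 2)) * hrec j + (1 + y) * x * g (j + 1) * ih
      + (1 - y ^ (j + 1)) * g (j + 1) * hy

theorem mul_one_sub_pow_mul_one_sub_pow_of_rec (hy : x * (1 + y) ^ 2 = y) {g e : ℕ → R}
    (h0 : g 0 = 1)
    (hrec : ∀ j, g (j + 1) = 1 + x * (g j * g (j + 1))) (he0 : e 0 = 1)
    (he : ∀ j, e (j + 1) = g (j + 1) - g j) (j : ℕ) :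
    e j * (1 - y ^ (j + 1)) * (1 - y ^ (j + 2)) = y ^ j * ((1 - y) ^ 2 * (1 + y)) := by
  rcases j with _ | j
  · rw [he0]
    ring
  · rw [he]
    linear_combination (1 - y ^ (j + 2)) * mul_one_sub_pow_of_rec hy h0 hrec (j + 1)
      - (1 - y ^ (j + 3)) * mul_one_sub_pow_of_rec hy h0 hrec j

-- `y ^ (2 * J) * tailFactor y J` is the tail `∑ j ≥ J, (e j ^ 2 + 2 * e j * e (j + 1))`.
noncomputable def tailFactor (y : R) (J : ℕ) : R :=
  (1 - y) ^ 3 * (1 + y) * (1 + 2 * y - y ^ (J + 2)) *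
    Ring.inverse ((1 - y ^ (J + 1)) ^ 2 * (1 - y ^ (J + 2)))

lemma tailFactor_mul (hu : ∀ k, IsUnit (1 - y ^ (k + 1))) (J : ℕ) :
    tailFactor y J * ((1 - y ^ (J + 1)) ^ 2 * (1 - y ^ (J + 2))) =
      (1 - y) ^ 3 * (1 + y) * (1 + 2 * y - y ^ (J + 2)) := by
  rw [tailFactor, mul_assoc, Ring.inverse_mul_cancel _ (((hu J).pow 2).mul (hu (J + 1))),
    mul_one]

theorem sum_range_sq_add_two_mul (hu : ∀ k, IsUnit (1 - y ^ (k + 1))) {e : ℕ → R}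
    (he : ∀ j, e j * (1 - y ^ (j + 1)) * (1 - y ^ (j + 2)) = y ^ j * ((1 - y) ^ 2 * (1 + y)))
    (J : ℕ) :
    ∑ j ∈ range J, (e j ^ 2 + 2 * e j * e (j + 1)) =
      1 + 2 * y - y ^ 2 - y ^ (2 * J) * tailFactor y J := by
  induction J with
  | zero =>
    have h0 : tailFactor y 0 = 1 + 2 * y - y ^ 2 := by
      refine (((hu 0).pow 2).mul (hu 1)).mul_right_cancel ?_
      linear_combination tailFactor_mul hu 0
    simp [h0]
  | succ J ih =>
    have hstep : e J ^ 2 + 2 * e J * e (J + 1) =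
        y ^ (2 * J) * tailFactor y J - y ^ (2 * (J + 1)) * tailFactor y (J + 1) := by
      refine ((((hu J).pow 2).mul ((hu (J + 1)).pow 2)).mul (hu (J + 2))).mul_right_cancel ?_
      linear_combination
        (e J * (1 - y ^ (J + 1)) * (1 - y ^ (J + 2)) + y ^ J * ((1 - y) ^ 2 * (1 + y)))
          * (1 - y ^ (J + 3)) * he J
        + 2 * (1 - y ^ (J + 1)) * (e (J + 1) * (1 - y ^ (J + 2)) * (1 - y ^ (J + 3)) * he J
          + y ^ J * ((1 - y) ^ 2 * (1 + y)) * he (J + 1))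
        - y ^ (2 * J) * (1 - y ^ (J + 2)) * (1 - y ^ (J + 3)) * tailFactor_mul hu J
        + y ^ (2 * (J + 1)) * (1 - y ^ (J + 1)) ^ 2 * tailFactor_mul hu (J + 1)
    rw [sum_range_succ, ih, hstep]
    ring

end Telescoping

noncomputable def catalanGF : ℚ⟦X⟧ := PowerSeries.map (Nat.castRingHom ℚ) catalanSeries

lemma coeff_catalanGF (n : ℕ) : coeff n catalanGF = catalan n := by
  simp [catalanGF, catalanSeries_coeff]

lemma catalanGF_eq : X * catalanGF ^ 2 = catalanGF - 1 := by
  have := congrArg (PowerSeries.map (Nat.castRingHom ℚ)) catalanSeries_sq_mul_X_add_one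
  simp only [map_add, map_mul, map_pow, map_X, map_one] at this
  rw [catalanGF]
  linear_combination this

lemma isUnit_one_sub_pow_catalanGF_sub_one (k : ℕ) :
    IsUnit (1 - (catalanGF - 1) ^ (k + 1)) := by
  have : constantCoeff catalanGF = 1 := by
    rw [← coeff_zero_eq_constantCoeff_apply, coeff_catalanGF, catalan_zero, Nat.cast_one]
  rw [isUnit_iff_constantCoeff, map_sub, map_pow, map_sub, this]
  simp

lemma coeff_one_add_two_mul_sub_sq {n : ℕ} (hn : 0 < n) :
    coeff n (1 + 2 * (catalanGF - 1) - (catalanGF - 1) ^ 2) =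
      (4 * catalan n - catalan (n + 1) : ℚ) := by
  have hsq : coeff n (catalanGF ^ 2) = (catalan (n + 1) : ℚ) := by
    rw [← coeff_succ_X_mul, catalanGF_eq, map_sub, coeff_catalanGF, coeff_one,
      if_neg n.succ_ne_zero, sub_zero]
  rw [show (1 + 2 * (catalanGF - 1) - (catalanGF - 1) ^ 2 : ℚ⟦X⟧) =
      C 4 * catalanGF - catalanGF ^ 2 - C 2 by simp only [map_ofNat]; ring,
    map_sub, map_sub, coeff_C_mul, coeff_C, if_neg hn.ne', hsq, coeff_catalanGF, sub_zero]

open Nat in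
lemma T_two_eq_catalan (n : ℕ) : T 2 n = (4 * catalan n - catalan (n + 1) : ℚ) := by
  have hcat : ∀ m : ℕ, (catalan m : ℚ) = (2 * m)! / ((m + 1)! * m !) := by
    intro m
    rw [eq_div_iff (by positivity)]
    have h1 := succ_mul_catalan_eq_centralBinom m
    have h2 := Nat.choose_mul_factorial_mul_factorial (show m ≤ 2 * m by omega)
    rw [show 2 * m - m = m by omega, ← Nat.centralBinom_eq_two_mul_choose, ← h1] at h2
    rw [← h2, Nat.factorial_succ]
    push_cast
    ring
  rw [T, hcat, hcat, show 2 * (n + 1) = 2 * n + 1 + 1 by ring, show 2 + n = n + 1 + 1 by ring]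
  simp only [Nat.factorial_succ]
  push_cast
  field_simp
  ring

lemma card_dyckPairs_abs_hgt_sub_le_one (n J : ℕ) (hJ : 2 * n < J) :
    #{pr ∈ dyckPairs n | |hgt pr.1 - hgt pr.2| ≤ 1} = ∑ j ∈ range J,
      (#{pr ∈ dyckPairs n | hgt pr.1 = j ∧ hgt pr.2 = j} +
        #{pr ∈ dyckPairs n | hgt pr.1 = j ∧ hgt pr.2 = ↑(j + 1)} +
        #{pr ∈ dyckPairs n | hgt pr.1 = ↑(j + 1) ∧ hgt pr.2 = j}) := by
  rw [card_eq_sum_card_fiberwise (t := range J)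
    (f := fun pr => (min (hgt pr.1) (hgt pr.2)).toNat)]
  · refine sum_congr rfl fun j _ => ?_
    rw [filter_filter, ← card_union_of_disjoint, ← card_union_of_disjoint]
    · congr 1
      ext pr
      simp only [mem_filter, mem_union]
      by_cases hD : pr ∈ dyckPairs n
      · have := hgt_nonneg pr.1
        have := hgt_nonneg pr.2
        simp only [hD, true_and, abs_le]
        omega
      · simp [hD]
    · exact disjoint_union_left.2 ⟨disjoint_filter.2 fun pr _ h h' => by omega,
        disjoint_filter.2 fun pr _ h h' => by omega⟩
    · exact disjoint_filter.2 fun pr _ h h' => by omega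
  · intro pr hpr
    rw [mem_coe, mem_filter, dyckPairs, mem_filter, mem_pairsOfLength] at hpr
    have := hgt_le_length pr.1
    have := hgt_le_length pr.2
    have := hgt_nonneg pr.1
    simp only [coe_range, Set.mem_Iio]
    omega

lemma sum_range_exactGF_sq_add_two_mul (J : ℕ) :
    ∑ j ∈ range J, (exactGF j ^ 2 + 2 * exactGF j * exactGF (j + 1)) =
      1 + 2 * (catalanGF - 1) - (catalanGF - 1) ^ 2 -
        (catalanGF - 1) ^ (2 * J) * tailFactor (catalanGF - 1) J := by
  have hy : X * (1 + (catalanGF - 1)) ^ 2 = catalanGF - 1 := by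
    rw [add_sub_cancel, catalanGF_eq]
  exact sum_range_sq_add_two_mul isUnit_one_sub_pow_catalanGF_sub_one
    (mul_one_sub_pow_mul_one_sub_pow_of_rec hy boundedGF_zero boundedGF_succ exactGF_zero
      exactGF_succ) J

lemma coeff_sum_range_exactGF_sq_add_two_mul {n J : ℕ} (hJ : 2 * n < J) :
    coeff n (∑ j ∈ range J, (exactGF j ^ 2 + 2 * exactGF j * exactGF (j + 1))) =
      (#{pr ∈ dyckPairs n | |hgt pr.1 - hgt pr.2| ≤ 1} : ℚ) := by
  rw [card_dyckPairs_abs_hgt_sub_le_one n J hJ, map_sum]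
  push_cast
  refine sum_congr rfl fun j _ => ?_
  rw [show exactGF j ^ 2 + 2 * exactGF j * exactGF (j + 1) = exactGF j * exactGF j +
      exactGF j * exactGF (j + 1) + exactGF (j + 1) * exactGF j by ring,
    map_add, map_add, coeff_exactGF_mul, coeff_exactGF_mul, coeff_exactGF_mul]
  push_cast
  rfl

lemma coeff_pow_mul_tailFactor_eq_zero {n J : ℕ} (hJ : n < 2 * J) :
    coeff n ((catalanGF - 1) ^ (2 * J) * tailFactor (catalanGF - 1) J) = 0 := by
  have hX : X ∣ catalanGF - 1 := ⟨_, catalanGF_eq.symm⟩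
  exact X_pow_dvd_iff.1 ((pow_dvd_pow_of_dvd hX _).mul_right _) n hJ

theorem T_two_eq_pairs_of_dyck_paths (n : ℕ) (hn : 0 < n) :
    T 2 n =
      ({pr : List Bool × List Bool | IsDyck pr.1 ∧ IsDyck pr.2 ∧
          pr.1.length + pr.2.length = 2 * n ∧
          |hgt pr.1 - hgt pr.2| ≤ 1}.ncard : ℚ) := by
  have hset : {pr : List Bool × List Bool | IsDyck pr.1 ∧ IsDyck pr.2 ∧
      pr.1.length + pr.2.length = 2 * n ∧ |hgt pr.1 - hgt pr.2| ≤ 1} =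
      ↑{pr ∈ dyckPairs n | |hgt pr.1 - hgt pr.2| ≤ 1} := by
    ext pr
    simp only [dyckPairs, coe_filter, mem_filter, mem_pairsOfLength, Set.mem_ofPred_eq]
    tauto
  rw [hset, Set.ncard_coe_finset,
    ← coeff_sum_range_exactGF_sq_add_two_mul (J := 2 * n + 1) (by omega),
    sum_range_exactGF_sq_add_two_mul, map_sub, coeff_pow_mul_tailFactor_eq_zero (by omega),
    sub_zero, coeff_one_add_two_mul_sub_sq hn, T_two_eq_catalan]
end
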